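/- arXiv:1910.12835 — 4 statements merged into one kernel-verified Lean document; each statement's English description precedes it below -/
import Mathlib

section
/- If H is an (r,η)-near-regular k-uniform hypergraph with η ∈ [0,1/3], then H is (r-1,η)-near-regular. -/
/-!
Double count the pairs `(v, f)` with `v ∉ S` and `insert v S ⊆ f ∈ H`: every edge through `S` has
exactly `k - (r - 1)` such `v`, so `(k - (r - 1)) · d(S)` is a sum of `N - (r - 1)` degrees of
`r`-sets, each within a factor `1 ± η` of `d̄_r`. Since `(N - (r - 1)) · d̄_r = (k - (r - 1)) · d̄_{r-1}`,
dividing by `k - (r - 1)` gives the bounds for `S`.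
-/

open Finset

variable {α : Type*} [Fintype α] [DecidableEq α]

theorem filter_insert_subset_compl_eq_sdiff {S f : Finset α} (hSf : S ⊆ f) :
    {v ∈ Sᶜ | insert v S ⊆ f} = f \ S := by
  ext v
  simp only [mem_filter, mem_compl, mem_sdiff, insert_subset_iff, and_iff_left hSf]
  tauto

theorem filter_insert_subset_compl_eq_empty {S f : Finset α} (hSf : ¬S ⊆ f) :
    {v ∈ Sᶜ | insert v S ⊆ f} = ∅ :=
  filter_false_of_mem fun _ _ h => hSf ((subset_insert _ S).trans h)

theorem sum_card_filter_insert_subset {H : Finset (Finset α)} {k : ℕ}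
    (huni : ∀ f ∈ H, #f = k) (S : Finset α) :
    ∑ v ∈ Sᶜ, #{f ∈ H | insert v S ⊆ f} = (k - #S) * #{f ∈ H | S ⊆ f} := by
  have hcount : ∀ f ∈ H, #{v ∈ Sᶜ | insert v S ⊆ f} = if S ⊆ f then k - #S else 0 := by
    intro f hf
    split_ifs with hSf
    · rw [filter_insert_subset_compl_eq_sdiff hSf, card_sdiff_of_subset hSf, huni f hf]
    · rw [filter_insert_subset_compl_eq_empty hSf, card_empty]
  calc ∑ v ∈ Sᶜ, #{f ∈ H | insert v S ⊆ f}
      = ∑ f ∈ H, #{v ∈ Sᶜ | insert v S ⊆ f} :=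
        sum_card_bipartiteAbove_eq_sum_card_bipartiteBelow (fun v f => insert v S ⊆ f)
    _ = (k - #S) * #{f ∈ H | S ⊆ f} := by
        rw [sum_congr rfl hcount, ← sum_filter, sum_const, smul_eq_mul, mul_comm]

theorem cast_sub_mul_choose_div_choose_succ (e : ℝ) {N s : ℕ} (k : ℕ) (hs : s < N) :
    ((N - s : ℕ) : ℝ) * (e * k.choose (s + 1) / N.choose (s + 1))
      = ((k - s : ℕ) : ℝ) * (e * k.choose s / N.choose s) := by
  have hN : (N.choose (s + 1) : ℝ) ≠ 0 := by exact_mod_cast (Nat.choose_pos hs).ne'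
  have hN' : (N.choose s : ℝ) ≠ 0 := by exact_mod_cast (Nat.choose_pos hs.le).ne'
  have h1 : (N.choose (s + 1) * (s + 1) : ℝ) = N.choose s * (N - s : ℕ) := by
    exact_mod_cast Nat.choose_succ_right_eq N s
  have h2 : (k.choose (s + 1) * (s + 1) : ℝ) = k.choose s * (k - s : ℕ) := by
    exact_mod_cast Nat.choose_succ_right_eq k s
  field_simp
  linear_combination (e * N.choose (s + 1)) * h2 - (e * k.choose (s + 1)) * h1

theorem near_regular_inherit_general (N k r : ℕ) (hr : 1 ≤ r) (hrk : r ≤ k)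
    (η : ℝ)
    (H : Finset (Finset (Fin N))) (huni : ∀ f ∈ H, f.card = k)
    (hreg : ∀ S : Finset (Fin N), S.card = r →
      (1 - η) * ((H.card : ℝ) * (k.choose r) / (N.choose r))
          ≤ ((H.filter (fun f => S ⊆ f)).card : ℝ) ∧
      ((H.filter (fun f => S ⊆ f)).card : ℝ)
          ≤ (1 + η) * ((H.card : ℝ) * (k.choose r) / (N.choose r))) :
    ∀ S : Finset (Fin N), S.card = r - 1 →
      (1 - η) * ((H.card : ℝ) * (k.choose (r - 1)) / (N.choose (r - 1)))
          ≤ ((H.filter (fun f => S ⊆ f)).card : ℝ) ∧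
      ((H.filter (fun f => S ⊆ f)).card : ℝ)
          ≤ (1 + η) * ((H.card : ℝ) * (k.choose (r - 1)) / (N.choose (r - 1))) := by
  intro S hS
  obtain rfl | ⟨f, hf⟩ := H.eq_empty_or_nonempty
  · simp
  obtain ⟨s, rfl⟩ : ∃ s, r = s + 1 := ⟨r - 1, by omega⟩
  rw [Nat.add_sub_cancel] at hS ⊢
  have hsN : s < N := by
    have := card_le_univ f
    rw [huni f hf, Fintype.card_fin] at this
    omega
  have hks : (0 : ℝ) < (k - s : ℕ) := by exact_mod_cast (by omega : 0 < k - s)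
  have hcompl : #Sᶜ = N - s := by rw [card_compl, Fintype.card_fin, hS]
  have hcard : ∀ v ∈ Sᶜ, #(insert v S) = s + 1 := fun v hv => by
    rw [card_insert_of_notMem (mem_compl.1 hv), hS]
  have hsum : ((k - s : ℕ) : ℝ) * #{f ∈ H | S ⊆ f}
      = ∑ v ∈ Sᶜ, (#{f ∈ H | insert v S ⊆ f} : ℝ) := by
    rw [← hS]
    exact_mod_cast (sum_card_filter_insert_subset huni S).symm
  have hdeg := cast_sub_mul_choose_div_choose_succ (#H : ℝ) k hsN
  constructor
  · refine le_of_mul_le_mul_left ?_ hks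
    calc ((k - s : ℕ) : ℝ) * ((1 - η) * (#H * k.choose s / N.choose s))
        = #Sᶜ • ((1 - η) * (#H * k.choose (s + 1) / N.choose (s + 1))) := by
          rw [nsmul_eq_mul, hcompl]; linear_combination (η - 1) * hdeg
      _ ≤ ∑ v ∈ Sᶜ, (#{f ∈ H | insert v S ⊆ f} : ℝ) :=
          card_nsmul_le_sum _ _ _ fun v hv => (hreg _ (hcard v hv)).1
      _ = _ := hsum.symm
  · refine le_of_mul_le_mul_left ?_ hks
    calc ((k - s : ℕ) : ℝ) * #{f ∈ H | S ⊆ f}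
        = ∑ v ∈ Sᶜ, (#{f ∈ H | insert v S ⊆ f} : ℝ) := hsum
      _ ≤ #Sᶜ • ((1 + η) * (#H * k.choose (s + 1) / N.choose (s + 1))) :=
          sum_le_card_nsmul _ _ _ fun v hv => (hreg _ (hcard v hv)).2
      _ = ((k - s : ℕ) : ℝ) * ((1 + η) * (#H * k.choose s / N.choose s)) := by
          rw [nsmul_eq_mul, hcompl]; linear_combination (1 + η) * hdeg

/-- If `H` is a `k`-uniform `(r,η)`-near-regular hypergraph with `η ∈ [0,1/3]`
(every `r`-set has degree within a factor `(1 ± η)` of the average `r`-degree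
`d̄_r = e(H)·C(k,r)/C(N,r)`), then `H` is `(r-1,η)`-near-regular. -/
theorem near_regular_inherit (N k r : ℕ) (hr : 1 ≤ r) (hrk : r ≤ k)
    (η : ℝ) (hη0 : 0 ≤ η) (hη1 : η ≤ 1 / 3)
    (H : Finset (Finset (Fin N))) (huni : ∀ f ∈ H, f.card = k)
    (hreg : ∀ S : Finset (Fin N), S.card = r →
      (1 - η) * ((H.card : ℝ) * (k.choose r) / (N.choose r))
          ≤ ((H.filter (fun f => S ⊆ f)).card : ℝ) ∧
      ((H.filter (fun f => S ⊆ f)).card : ℝ)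
          ≤ (1 + η) * ((H.card : ℝ) * (k.choose r) / (N.choose r))) :
    ∀ S : Finset (Fin N), S.card = r - 1 →
      (1 - η) * ((H.card : ℝ) * (k.choose (r - 1)) / (N.choose (r - 1)))
          ≤ ((H.filter (fun f => S ⊆ f)).card : ℝ) ∧
      ((H.filter (fun f => S ⊆ f)).card : ℝ)
          ≤ (1 + η) * ((H.card : ℝ) * (k.choose (r - 1)) / (N.choose (r - 1))) :=
  near_regular_inherit_general N k r hr hrk η H huni hreg
end

section
/- Let H be a k-uniform (r,η)-near-regular hypergraph with η ∈ [0,1/3] and maximum (r+1)-degree Δ_{r+1}, and let x be a vertex of H. Then the link hypergraph H(x) := { f \ {x} : f ∈ E(H), x ∈ f } is a (k-1)-uniform hypergraph which is (r-1, 3η)-near-regular and has maximum r-degree at most Δ_{r+1}. -/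
/-!
Edges of the link `H(x)` containing an `(r-1)`-set `S ∌ x` correspond to edges of `H` containing
the `r`-set `S ∪ {x}`, so link degrees are degrees of `H` and inherit both the near-regularity and
the bound `Δ`. The average `(r-1)`-degree of the link is, by double counting pairs `(T, f)` with
`x ∈ T ⊆ f ∈ H` and `#T = r`, the mean of the `r`-degrees of `H` over the sets `T ∋ x`; hence it is
also within a factor `1 ± η` of `d̄_r`. Two quantities both within `1 ± η` of `d̄_r` are within
`1 ± 3η` of each other as long as `η ≤ 1/3`.
-/

open Finset

def IsNear (η c a : ℝ) : Prop := (1 - η) * c ≤ a ∧ a ≤ (1 + η) * c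

theorem IsNear.three_mul_of_isNear {η c a b : ℝ} (hη0 : 0 ≤ η) (hη1 : η ≤ 1 / 3)
    (ha : IsNear η c a) (hb : IsNear η c b) : IsNear (3 * η) a b := by
  obtain ⟨ha₁, ha₂⟩ := ha
  obtain ⟨hb₁, hb₂⟩ := hb
  have hηc : 0 ≤ η * c := by linarith
  constructor <;> nlinarith [mul_nonneg hη0 hηc]

theorem IsNear.div_card {ι : Type*} {A : Finset ι} {f : ι → ℝ} {η c : ℝ} (hA : A.Nonempty)
    (h : ∀ i ∈ A, IsNear η c (f i)) : IsNear η c ((∑ i ∈ A, f i) / #A) := by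
  have hA' : (0 : ℝ) < #A := by exact_mod_cast hA.card_pos
  constructor
  · rw [le_div_iff₀ hA', mul_comm, ← nsmul_eq_mul]
    exact card_nsmul_le_sum A f _ fun i hi => (h i hi).1
  · rw [div_le_iff₀ hA', mul_comm, ← nsmul_eq_mul]
    exact sum_le_card_nsmul A f _ fun i hi => (h i hi).2

theorem card_filter_mem_powersetCard_succ {α : Type*} [DecidableEq α] {s : Finset α} {x : α}
    (hx : x ∈ s) (m : ℕ) : #{T ∈ s.powersetCard (m + 1) | x ∈ T} = (#s - 1).choose m := by
  rw [← card_erase_of_mem hx, ← card_powersetCard m (s.erase x)]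
  refine card_nbij' (·.erase x) (insert x) (fun T hT => ?_) (fun T hT => ?_) (fun T hT => ?_)
    (fun T hT => ?_) <;>
    simp only [coe_filter, mem_coe, mem_powersetCard, Set.mem_ofPred_eq] at hT ⊢
  · exact ⟨erase_subset_erase x hT.1.1, by rw [card_erase_of_mem hT.2, hT.1.2]; rfl⟩
  · have hxT : x ∉ T := fun h => (mem_erase.mp (hT.1 h)).1 rfl
    refine ⟨⟨insert_subset hx (hT.1.trans (erase_subset x s)), ?_⟩, mem_insert_self x T⟩
    rw [card_insert_of_notMem hxT, hT.2]
  · exact insert_erase hT.2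
  · exact erase_insert fun h => (mem_erase.mp (hT.1 h)).1 rfl

section Link

variable {α : Type*} [DecidableEq α]

def link (H : Finset (Finset α)) (x : α) : Finset (Finset α) :=
  (H.filter (fun f => x ∈ f)).image (fun f => f.erase x)

variable {H : Finset (Finset α)} {x : α}

theorem card_link : #(link H x) = #{f ∈ H | x ∈ f} :=
  card_image_of_injOn fun _ hf _ hg => erase_injOn' x (mem_filter.mp hf).2 (mem_filter.mp hg).2

theorem card_of_mem_link {k : ℕ} (huni : ∀ f ∈ H, #f = k) {g : Finset α} (hg : g ∈ link H x) :
    #g = k - 1 := by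
  obtain ⟨f, hf, rfl⟩ := mem_image.mp hg
  rw [mem_filter] at hf
  rw [card_erase_of_mem hf.2, huni f hf.1]

theorem link_filter_subset {S : Finset α} (hxS : x ∉ S) :
    {g ∈ link H x | S ⊆ g} = link {f ∈ H | insert x S ⊆ f} x := by
  rw [link, link, filter_image, filter_filter, filter_filter]
  congr 1
  exact filter_congr fun f _ => by simp [subset_erase, insert_subset_iff, hxS, and_comm]

theorem card_link_filter_subset {S : Finset α} (hxS : x ∉ S) :
    #{g ∈ link H x | S ⊆ g} = #{f ∈ H | insert x S ⊆ f} := by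
  rw [link_filter_subset hxS, card_link, filter_filter]
  exact congrArg card <| filter_congr fun f _ => and_iff_left_of_imp (insert_subset_iff.mp · |>.1)

theorem sum_card_filter_superset_eq_card_link_mul [Fintype α] {k : ℕ} (huni : ∀ f ∈ H, #f = k)
    (m : ℕ) :
    ∑ T ∈ {T ∈ powersetCard (m + 1) univ | x ∈ T}, #{f ∈ H | T ⊆ f}
      = #(link H x) * (k - 1).choose m := by
  set A : Finset (Finset α) := {T ∈ powersetCard (m + 1) univ | x ∈ T} with hA_def
  have hA : ∀ f, {T ∈ A | T ⊆ f} = {T ∈ f.powersetCard (m + 1) | x ∈ T} := fun f => by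
    ext T
    simp only [hA_def, mem_filter, mem_powersetCard, subset_univ, true_and]
    tauto
  have hcount : ∀ f ∈ H, #{T ∈ A | T ⊆ f} = if x ∈ f then (k - 1).choose m else 0 := by
    intro f hf
    split_ifs with hxf
    · rw [hA, card_filter_mem_powersetCard_succ hxf, huni f hf]
    · rw [hA, card_eq_zero, filter_eq_empty_iff]
      exact fun T hT hxT => hxf ((mem_powersetCard.mp hT).1 hxT)
  calc ∑ T ∈ A, #{f ∈ H | T ⊆ f} = ∑ f ∈ H, #{T ∈ A | T ⊆ f} :=
        sum_card_bipartiteAbove_eq_sum_card_bipartiteBelow _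
    _ = ∑ f ∈ H, if x ∈ f then (k - 1).choose m else 0 := sum_congr rfl hcount
    _ = #(link H x) * (k - 1).choose m := by rw [← sum_filter, sum_const, smul_eq_mul, card_link]

end Link

theorem link_near_regular_general (N k r : ℕ) (hr : 1 ≤ r)
    (η : ℝ) (hη0 : 0 ≤ η) (hη1 : η ≤ 1 / 3) (Δ : ℕ)
    (H : Finset (Finset (Fin N))) (huni : ∀ f ∈ H, f.card = k)
    (hreg : ∀ S : Finset (Fin N), S.card = r →
      (1 - η) * ((H.card : ℝ) * (k.choose r) / (N.choose r))
          ≤ ((H.filter (fun f => S ⊆ f)).card : ℝ) ∧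
      ((H.filter (fun f => S ⊆ f)).card : ℝ)
          ≤ (1 + η) * ((H.card : ℝ) * (k.choose r) / (N.choose r)))
    (hΔ : ∀ T : Finset (Fin N), T.card = r + 1 →
      (H.filter (fun f => T ⊆ f)).card ≤ Δ)
    (x : Fin N)
    (Hx : Finset (Finset (Fin N)))
    (hHx : Hx = (H.filter (fun f => x ∈ f)).image (fun f => f.erase x)) :
    (∀ g ∈ Hx, g.card = k - 1) ∧
    (∀ S : Finset (Fin N), x ∉ S → S.card = r - 1 →
      (1 - 3 * η) * ((Hx.card : ℝ) * ((k - 1).choose (r - 1)) / ((N - 1).choose (r - 1)))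
          ≤ ((Hx.filter (fun g => S ⊆ g)).card : ℝ) ∧
      ((Hx.filter (fun g => S ⊆ g)).card : ℝ)
          ≤ (1 + 3 * η) * ((Hx.card : ℝ) * ((k - 1).choose (r - 1)) / ((N - 1).choose (r - 1)))) ∧
    (∀ T : Finset (Fin N), x ∉ T → T.card = r →
      (Hx.filter (fun g => T ⊆ g)).card ≤ Δ) := by
  obtain rfl : Hx = link H x := hHx
  obtain ⟨m, rfl⟩ : ∃ m, r = m + 1 := ⟨r - 1, by omega⟩
  refine ⟨fun g => card_of_mem_link huni, fun S hxS hS => ?_, fun T hxT hT => ?_⟩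
  · rw [Nat.add_sub_cancel] at hS ⊢
    have hxS_card : #(insert x S) = m + 1 := by rw [card_insert_of_notMem hxS, hS]
    set d : ℝ := #H * k.choose (m + 1) / N.choose (m + 1)
    set A : Finset (Finset (Fin N)) := {T ∈ powersetCard (m + 1) univ | x ∈ T}
    have hA_card : #A = (N - 1).choose m := by
      rw [card_filter_mem_powersetCard_succ (mem_univ x), card_univ, Fintype.card_fin]
    have hA : A.Nonempty := ⟨insert x S, by simp [A, hxS_card]⟩
    have hlink : IsNear η d (#(link H x) * (k - 1).choose m / (N - 1).choose m : ℝ) := by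
      have := IsNear.div_card hA fun T hT => hreg T (mem_powersetCard.mp (mem_filter.mp hT).1).2
      rwa [← Nat.cast_sum, sum_card_filter_superset_eq_card_link_mul huni, Nat.cast_mul,
        hA_card] at this
    have hS_deg : IsNear η d (#{g ∈ link H x | S ⊆ g} : ℝ) := by
      rw [card_link_filter_subset hxS]
      exact hreg _ hxS_card
    exact hlink.three_mul_of_isNear hη0 hη1 hS_deg
  · rw [card_link_filter_subset hxT]
    exact hΔ _ (by rw [card_insert_of_notMem hxT, hT])

/-- Link inheritance: if `H` is `k`-uniform, `(r,η)`-near-regular with `η ∈ [0,1/3]`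
and maximum `(r+1)`-degree `Δ`, then the link `H(x) = {f \ {x} : x ∈ f ∈ H}`
is `(k-1)`-uniform, `(r-1,3η)`-near-regular (relative to its own average
`(r-1)`-degree `e(H(x))·C(k-1,r-1)/C(N-1,r-1)`), and has maximum `r`-degree at most `Δ`. -/
theorem link_near_regular (N k r : ℕ) (hr : 1 ≤ r) (hrk : r + 1 ≤ k)
    (η : ℝ) (hη0 : 0 ≤ η) (hη1 : η ≤ 1 / 3) (Δ : ℕ)
    (H : Finset (Finset (Fin N))) (huni : ∀ f ∈ H, f.card = k)
    (hreg : ∀ S : Finset (Fin N), S.card = r →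
      (1 - η) * ((H.card : ℝ) * (k.choose r) / (N.choose r))
          ≤ ((H.filter (fun f => S ⊆ f)).card : ℝ) ∧
      ((H.filter (fun f => S ⊆ f)).card : ℝ)
          ≤ (1 + η) * ((H.card : ℝ) * (k.choose r) / (N.choose r)))
    (hΔ : ∀ T : Finset (Fin N), T.card = r + 1 →
      (H.filter (fun f => T ⊆ f)).card ≤ Δ)
    (x : Fin N)
    (Hx : Finset (Finset (Fin N)))
    (hHx : Hx = (H.filter (fun f => x ∈ f)).image (fun f => f.erase x)) :
    (∀ g ∈ Hx, g.card = k - 1) ∧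
    (∀ S : Finset (Fin N), x ∉ S → S.card = r - 1 →
      (1 - 3 * η) * ((Hx.card : ℝ) * ((k - 1).choose (r - 1)) / ((N - 1).choose (r - 1)))
          ≤ ((Hx.filter (fun g => S ⊆ g)).card : ℝ) ∧
      ((Hx.filter (fun g => S ⊆ g)).card : ℝ)
          ≤ (1 + 3 * η) * ((Hx.card : ℝ) * ((k - 1).choose (r - 1)) / ((N - 1).choose (r - 1)))) ∧
    (∀ T : Finset (Fin N), x ∉ T → T.card = r →
      (Hx.filter (fun g => T ⊆ g)).card ≤ Δ) :=
  link_near_regular_general N k r hr η hη0 hη1 Δ H huni hreg hΔ x Hx hHx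
end

section
/- Deterministic increment bound: let H be a k-uniform (r,η)-near-regular hypergraph on [N] with h edges. Fix 1 ≤ ℓ ≤ r, and let B_i = B_{i-1} ∪ {b_i} with B_{i-1} of size i-1 and b_i ∉ B_{i-1}. Then the increment A_ℓ(B_i) := N_ℓ(B_i) - N_ℓ(B_{i-1}) satisfies |A_ℓ(B_i) - C(i-1,ℓ-1)·d̄_ℓ| ≤ η·C(i-1,ℓ-1)·d̄_ℓ, and consequently the centered increment X_ℓ(B_i) := A_ℓ(B_i) - E[A_ℓ(B_i)|B_{i-1}] satisfies |X_ℓ(B_i)| ≤ 2ℓ·C(k,ℓ)·η·s^{ℓ-1}·h/N where s = i/N. -/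
/-!
Double counting pairs (T, f) with S ⊆ T ⊆ f, |T| = r, gives
deg S · C(k-ℓ, r-ℓ) = ∑_{T ⊇ S, |T| = r} deg T, so near-regularity at level r passes down to
every level ℓ ≤ r, with average degree d̄_ℓ. Pascal's rule, edge by edge, shows that adding
b ∉ B to B raises N_ℓ by ∑_{C ⊆ B, |C| = ℓ-1} deg (C ∪ {b}), a sum of C(i-1, ℓ-1) degrees of
ℓ-sets, each within (1 ± η) d̄_ℓ. The conditional mean over b lies in the same interval, hence
within 2η C(i-1, ℓ-1) d̄_ℓ of A_ℓ, and C(i-1, ℓ-1) / C(N, ℓ) ≤ ℓ i^(ℓ-1) / N^ℓ finishes.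
-/

open Finset

theorem Finset.sum_mem_Icc_of_forall_mem_Icc {ι M : Type*} [AddCommMonoid M] [PartialOrder M]
    [IsOrderedAddMonoid M] {s : Finset ι} {f : ι → M} {a b : M}
    (h : ∀ i ∈ s, f i ∈ Set.Icc a b) : ∑ i ∈ s, f i ∈ Set.Icc (#s • a) (#s • b) :=
  ⟨card_nsmul_le_sum s f a fun i hi => (h i hi).1, sum_le_card_nsmul s f b fun i hi => (h i hi).2⟩

theorem Finset.abs_sub_sum_div_card_le_of_forall_mem_Icc {ι : Type*} {s : Finset ι}
    {f : ι → ℝ} {a b : ℝ} {j : ι} (hj : j ∈ s) (h : ∀ i ∈ s, f i ∈ Set.Icc a b) :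
    |f j - (∑ i ∈ s, f i) / #s| ≤ b - a := by
  have hmean : (∑ i ∈ s, f i) / #s ∈ Set.Icc a b := by
    rw [← expect_eq_sum_div_card]
    exact ⟨le_expect ⟨j, hj⟩ fun i hi => (h i hi).1, expect_le ⟨j, hj⟩ fun i hi => (h i hi).2⟩
  exact Real.dist_le_of_mem_Icc (h j hj) hmean

theorem Nat.descFactorial_mul_add_one_pow_le {a b : ℕ} (hab : a ≤ b) (m : ℕ) :
    a.descFactorial m * (b + 1) ^ m ≤ (a + 1) ^ m * b.descFactorial m := by
  induction m with
  | zero => simp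
  | succ m ih =>
    have hstep : (a - m) * (b + 1) ≤ (a + 1) * (b - m) := by
      rcases le_or_gt m a with hma | hma
      · obtain ⟨c, rfl⟩ := Nat.exists_eq_add_of_le hma
        obtain ⟨e, rfl⟩ := Nat.exists_eq_add_of_le hab
        simp only [Nat.add_sub_cancel_left, show m + c + e - m = c + e by omega]
        nlinarith
      · simp [Nat.sub_eq_zero_of_le hma.le]
    rw [Nat.descFactorial_succ, Nat.descFactorial_succ]
    calc (a - m) * a.descFactorial m * (b + 1) ^ (m + 1)
        = ((a - m) * (b + 1)) * (a.descFactorial m * (b + 1) ^ m) := by ring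
      _ ≤ ((a + 1) * (b - m)) * ((a + 1) ^ m * b.descFactorial m) := Nat.mul_le_mul hstep ih
      _ = (a + 1) ^ (m + 1) * ((b - m) * b.descFactorial m) := by ring

theorem Nat.choose_mul_add_one_pow_le {a b : ℕ} (hab : a ≤ b) (m : ℕ) :
    a.choose m * (b + 1) ^ m ≤ (a + 1) ^ m * b.choose m := by
  have h := Nat.descFactorial_mul_add_one_pow_le hab m
  rw [Nat.descFactorial_eq_factorial_mul_choose, Nat.descFactorial_eq_factorial_mul_choose] at h
  refine Nat.le_of_mul_le_mul_left ?_ m.factorial_pos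
  linarith

theorem choose_pred_div_choose_le {ℓ i N : ℕ} (hℓ : 1 ≤ ℓ) (hi : 1 ≤ i) (hiN : i ≤ N)
    (hℓN : ℓ ≤ N) :
    ((i - 1).choose (ℓ - 1) : ℝ) / N.choose ℓ ≤ ℓ * ((i : ℝ) / N) ^ (ℓ - 1) / N := by
  obtain ⟨m, rfl⟩ := Nat.exists_eq_add_of_le' hℓ
  obtain ⟨a, rfl⟩ := Nat.exists_eq_add_of_le' hi
  obtain ⟨b, rfl⟩ := Nat.exists_eq_add_of_le' (hi.trans hiN)
  simp only [Nat.add_sub_cancel]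
  have hpascal : ((b + 1).choose (m + 1) : ℝ) * (m + 1) = (b + 1) * b.choose m := by
    exact_mod_cast (Nat.add_one_mul_choose_eq b m).symm
  have hmain : (a.choose m : ℝ) * (b + 1) ^ m ≤ (a + 1) ^ m * b.choose m := by
    exact_mod_cast Nat.choose_mul_add_one_pow_le (by omega : a ≤ b) m
  have hbc : (0 : ℝ) < (b + 1).choose (m + 1) := by exact_mod_cast Nat.choose_pos (by omega)
  push_cast
  rw [div_pow, mul_div_assoc', div_div, div_le_div_iff₀ hbc (by positivity)]
  calc (a.choose m : ℝ) * (((b : ℝ) + 1) ^ m * (b + 1))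
      ≤ (a + 1) ^ m * b.choose m * (b + 1) := by rw [← mul_assoc]; gcongr
    _ = (m + 1) * (a + 1) ^ m * (b + 1).choose (m + 1) := by
        linear_combination -((a : ℝ) + 1) ^ m * hpascal

namespace Hypergraph

variable {α : Type*}

theorem eq_empty_of_uniform_of_card_lt [Fintype α] {H : Finset (Finset α)} {k : ℕ}
    (huni : ∀ f ∈ H, #f = k) (hk : Fintype.card α < k) : H = ∅ :=
  eq_empty_of_forall_notMem fun f hf => (huni f hf ▸ card_le_univ f).not_gt hk

variable [DecidableEq α]

def degree (H : Finset (Finset α)) (S : Finset α) : ℕ := #{f ∈ H | S ⊆ f}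

def IsNearRegular (H : Finset (Finset α)) (r : ℕ) (η d : ℝ) : Prop :=
  ∀ S : Finset α, #S = r → (degree H S : ℝ) ∈ Set.Icc ((1 - η) * d) ((1 + η) * d)

/-- Each of the `h` edges contains `C(k, ℓ)` of the `C(N, ℓ)` possible `ℓ`-sets. -/
noncomputable def avgDegree (h k N ℓ : ℕ) : ℝ := h * k.choose ℓ / N.choose ℓ

theorem card_filter_superset_powersetCard {S f : Finset α} {n : ℕ} (hSf : S ⊆ f)
    (hSn : #S ≤ n) :
    #{T ∈ f.powersetCard n | S ⊆ T} = (#f - #S).choose (n - #S) := by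
  rw [← card_sdiff_of_subset hSf, ← card_powersetCard]
  apply card_nbij' (· \ S) (S ∪ ·)
  · intro T hT
    simp only [coe_filter, mem_powersetCard, Set.mem_ofPred_eq, mem_coe] at hT ⊢
    exact ⟨sdiff_subset_sdiff hT.1.1 le_rfl, by rw [card_sdiff_of_subset hT.2, hT.1.2]⟩
  · intro U hU
    simp only [coe_filter, mem_powersetCard, Set.mem_ofPred_eq, mem_coe] at hU ⊢
    have hdisj : Disjoint S U := disjoint_of_subset_right hU.1 disjoint_sdiff_self_right
    refine ⟨⟨union_subset hSf (hU.1.trans sdiff_subset), ?_⟩, subset_union_left⟩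
    rw [card_union_of_disjoint hdisj, hU.2]
    omega
  · intro T hT
    simp only [coe_filter, Set.mem_ofPred_eq] at hT
    exact union_sdiff_of_subset hT.2
  · intro U hU
    simp only [mem_coe, mem_powersetCard] at hU
    exact union_sdiff_cancel_left (disjoint_of_subset_right hU.1 disjoint_sdiff_self_right)

theorem sum_degree_superset [Fintype α] {H : Finset (Finset α)} {k r : ℕ} (huni : ∀ f ∈ H, #f = k)
    {S : Finset α} (hSr : #S ≤ r) :
    ∑ T ∈ {T ∈ univ.powersetCard r | S ⊆ T}, degree H T
      = degree H S * (k - #S).choose (r - #S) := by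
  have hcount (f : Finset α) (hf : f ∈ H) :
      #{T ∈ {T ∈ univ.powersetCard r | S ⊆ T} | T ⊆ f}
        = if S ⊆ f then (k - #S).choose (r - #S) else 0 := by
    split_ifs with hSf
    · rw [← huni f hf, ← card_filter_superset_powersetCard hSf hSr]
      congr 1
      ext T
      simp only [mem_filter, mem_powersetCard, subset_univ, true_and]
      tauto
    · rw [card_eq_zero, filter_eq_empty_iff]
      exact fun T hT hTf => hSf ((mem_filter.1 hT).2.trans hTf)
  calc ∑ T ∈ {T ∈ univ.powersetCard r | S ⊆ T}, degree H T
      = ∑ f ∈ H, #{T ∈ {T ∈ univ.powersetCard r | S ⊆ T} | T ⊆ f} := by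
        simp only [degree, card_filter]
        exact sum_comm
    _ = degree H S * (k - #S).choose (r - #S) := by
        rw [sum_congr rfl hcount, ← sum_filter, sum_const, smul_eq_mul, degree]

theorem IsNearRegular.of_le [Fintype α] {H : Finset (Finset α)} {k r ℓ : ℕ} {η d : ℝ}
    (hreg : IsNearRegular H r η d) (huni : ∀ f ∈ H, #f = k) (hℓr : ℓ ≤ r) (hrk : r ≤ k) :
    IsNearRegular H ℓ η
      (d * (Fintype.card α - ℓ).choose (r - ℓ) / (k - ℓ).choose (r - ℓ)) := by
  intro S hS
  have hc : (0 : ℝ) < (k - ℓ).choose (r - ℓ) := by exact_mod_cast Nat.choose_pos (by omega)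
  have hsum := sum_mem_Icc_of_forall_mem_Icc (s := {T ∈ univ.powersetCard r | S ⊆ T})
    fun T hT => hreg T (mem_powersetCard.1 (mem_filter.1 hT).1).2
  have hSr : #S ≤ r := hS.le.trans hℓr
  rw [← Nat.cast_sum, sum_degree_superset huni hSr,
    card_filter_superset_powersetCard (subset_univ S) hSr, card_univ, hS, nsmul_eq_mul,
    nsmul_eq_mul] at hsum
  push_cast at hsum
  constructor
  · rw [mul_div_assoc', div_le_iff₀ hc]
    linarith [hsum.1]
  · rw [mul_div_assoc', le_div_iff₀ hc]
    linarith [hsum.2]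

theorem avgDegree_mul_choose_div_choose (h : ℕ) {k N r ℓ : ℕ} (hℓr : ℓ ≤ r) (hrk : r ≤ k)
    (hrN : r ≤ N) :
    avgDegree h k N r * (N - ℓ).choose (r - ℓ) / (k - ℓ).choose (r - ℓ) = avgDegree h k N ℓ := by
  have hN : ((N.choose r * r.choose ℓ : ℕ) : ℝ) = N.choose ℓ * (N - ℓ).choose (r - ℓ) := by
    exact_mod_cast Nat.choose_mul hℓr
  have hk : ((k.choose r * r.choose ℓ : ℕ) : ℝ) = k.choose ℓ * (k - ℓ).choose (r - ℓ) := by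
    exact_mod_cast Nat.choose_mul hℓr
  have hNr : (0 : ℝ) < N.choose r := by exact_mod_cast Nat.choose_pos hrN
  have hNℓ : (0 : ℝ) < N.choose ℓ := by exact_mod_cast Nat.choose_pos (hℓr.trans hrN)
  have hkℓ : (0 : ℝ) < (k - ℓ).choose (r - ℓ) := by exact_mod_cast Nat.choose_pos (by omega)
  have hrℓ : (0 : ℝ) < r.choose ℓ := by exact_mod_cast Nat.choose_pos hℓr
  push_cast at hN hk
  unfold avgDegree
  field_simp
  apply mul_left_cancel₀ hrℓ.ne'
  linear_combination (h : ℝ) * (N - ℓ).choose (r - ℓ) * N.choose ℓ * hk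
    - (h : ℝ) * (k - ℓ).choose (r - ℓ) * k.choose ℓ * hN

theorem choose_card_inter_insert {B f : Finset α} {b : α} (hb : b ∉ B) (l : ℕ) :
    (#(f ∩ insert b B)).choose (l + 1)
      = (#(f ∩ B)).choose (l + 1) + #{C ∈ B.powersetCard l | insert b C ⊆ f} := by
  by_cases hbf : b ∈ f
  · have hfilter : {C ∈ B.powersetCard l | insert b C ⊆ f} = (f ∩ B).powersetCard l := by
      ext C
      simp only [mem_filter, mem_powersetCard, insert_subset_iff, subset_inter_iff]
      tauto
    rw [inter_insert_of_mem hbf, card_insert_of_notMem fun h => hb (mem_inter.1 h).2,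
      Nat.choose_succ_succ', hfilter, card_powersetCard, add_comm]
  · have hfilter : {C ∈ B.powersetCard l | insert b C ⊆ f} = ∅ :=
      filter_eq_empty_iff.2 fun C _ hC => hbf (hC (mem_insert_self b C))
    rw [inter_insert_of_notMem hbf, hfilter, card_empty, add_zero]

theorem sum_choose_card_inter_insert (H : Finset (Finset α)) {B : Finset α} {b : α}
    (hb : b ∉ B) (l : ℕ) :
    ∑ f ∈ H, (#(f ∩ insert b B)).choose (l + 1)
      = ∑ f ∈ H, (#(f ∩ B)).choose (l + 1) + ∑ C ∈ B.powersetCard l, degree H (insert b C) := by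
  rw [sum_congr rfl fun f _ => choose_card_inter_insert hb l, sum_add_distrib]
  congr 1
  simp only [degree, card_filter]
  exact sum_comm

theorem IsNearRegular.sum_choose_card_inter_insert_sub_mem_Icc {H : Finset (Finset α)}
    {ℓ : ℕ} {η d : ℝ} (hreg : IsNearRegular H ℓ η d) (hℓ : 1 ≤ ℓ) {B : Finset α} {b : α}
    (hb : b ∉ B) :
    (∑ f ∈ H, ((#(f ∩ insert b B)).choose ℓ : ℝ)) - ∑ f ∈ H, ((#(f ∩ B)).choose ℓ : ℝ)
      ∈ Set.Icc ((1 - η) * ((#B).choose (ℓ - 1) * d)) ((1 + η) * ((#B).choose (ℓ - 1) * d)) := by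
  obtain ⟨l, rfl⟩ := Nat.exists_eq_add_of_le' hℓ
  have hsum := sum_mem_Icc_of_forall_mem_Icc fun C hC => hreg (insert b C) <| by
    rw [card_insert_of_notMem fun h => hb ((mem_powersetCard.1 hC).1 h),
      (mem_powersetCard.1 hC).2]
  rw [card_powersetCard, nsmul_eq_mul, nsmul_eq_mul] at hsum
  rw [← Nat.cast_sum, ← Nat.cast_sum, sum_choose_card_inter_insert H hb l, Nat.cast_add,
    add_sub_cancel_left, Nat.cast_sum, Nat.add_sub_cancel]
  exact ⟨by linarith [hsum.1], by linarith [hsum.2]⟩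

end Hypergraph

open Hypergraph

/-- Deterministic increment bound: for a `k`-uniform `(r,η)`-near-regular
hypergraph `H` on `N` vertices with `h` edges, `1 ≤ ℓ ≤ r ≤ k`, and
`B_i = B ∪ {b}` with `|B| = i-1`, `b ∉ B`, the increment
`A_ℓ = N_ℓ(B ∪ {b}) - N_ℓ(B)` satisfies
`|A_ℓ - C(i-1,ℓ-1)·d̄_ℓ| ≤ η·C(i-1,ℓ-1)·d̄_ℓ`, and the centered increment
`X_ℓ = A_ℓ - E[A_ℓ | B]` satisfies `|X_ℓ| ≤ 2ℓ·C(k,ℓ)·η·s^{ℓ-1}·h/N`, `s = i/N`. -/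
theorem deterministic_increment_bound (N k r ℓ i h : ℕ)
    (hℓ : 1 ≤ ℓ) (hℓr : ℓ ≤ r) (hrk : r ≤ k) (hi : 1 ≤ i) (hiN : i ≤ N)
    (η : ℝ) (hη0 : 0 ≤ η)
    (H : Finset (Finset (Fin N))) (hH : H.card = h)
    (huni : ∀ f ∈ H, f.card = k)
    (hreg : ∀ S : Finset (Fin N), S.card = r →
      (1 - η) * ((h : ℝ) * (k.choose r) / (N.choose r))
          ≤ ((H.filter (fun f => S ⊆ f)).card : ℝ) ∧
      ((H.filter (fun f => S ⊆ f)).card : ℝ)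
          ≤ (1 + η) * ((h : ℝ) * (k.choose r) / (N.choose r)))
    (B : Finset (Fin N)) (hB : B.card = i - 1) (b : Fin N) (hb : b ∉ B)
    (A : Fin N → ℝ)
    (hA : ∀ b' : Fin N, A b' =
      (∑ f ∈ H, (((f ∩ insert b' B).card.choose ℓ : ℕ) : ℝ))
        - ∑ f ∈ H, (((f ∩ B).card.choose ℓ : ℕ) : ℝ)) :
    |A b - ((i - 1).choose (ℓ - 1) : ℝ) * ((h : ℝ) * (k.choose ℓ) / (N.choose ℓ))|
        ≤ η * ((i - 1).choose (ℓ - 1) : ℝ) * ((h : ℝ) * (k.choose ℓ) / (N.choose ℓ)) ∧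
    |A b - (∑ b' ∈ Bᶜ, A b') / ((N : ℝ) - i + 1)|
        ≤ 2 * ℓ * (k.choose ℓ : ℝ) * η * ((i : ℝ) / N) ^ (ℓ - 1) * h / N := by
  rcases le_or_gt k N with hkN | hNk
  swap
  · obtain rfl := eq_empty_of_uniform_of_card_lt huni (by rwa [Fintype.card_fin])
    subst hH
    simp [hA]
  set d : ℝ := h * k.choose ℓ / N.choose ℓ with hd
  set n : ℝ := (((i - 1).choose (ℓ - 1) : ℕ) : ℝ) with hn
  have hℓreg : IsNearRegular H ℓ η d := by
    have := IsNearRegular.of_le (d := avgDegree h k N r) hreg huni hℓr hrk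
    rwa [Fintype.card_fin, avgDegree_mul_choose_div_choose h hℓr hrk (hrk.trans hkN)] at this
  have hinc (b' : Fin N) (hb' : b' ∉ B) :
      A b' ∈ Set.Icc ((1 - η) * (n * d)) ((1 + η) * (n * d)) := by
    rw [hA, hn, ← hB]
    exact hℓreg.sum_choose_card_inter_insert_sub_mem_Icc hℓ hb'
  have hAb := hinc b hb
  refine ⟨abs_sub_le_iff.2 ⟨by linarith [hAb.2], by linarith [hAb.1]⟩, ?_⟩
  have hcompl : ((#Bᶜ : ℕ) : ℝ) = N - i + 1 := by
    rw [card_compl, Fintype.card_fin, hB, Nat.cast_sub (by omega), Nat.cast_sub hi]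
    ring
  calc |A b - (∑ b' ∈ Bᶜ, A b') / ((N : ℝ) - i + 1)|
      ≤ (1 + η) * (n * d) - (1 - η) * (n * d) := by
        rw [← hcompl]
        exact abs_sub_sum_div_card_le_of_forall_mem_Icc (mem_compl.2 hb)
          fun b' hb' => hinc b' (mem_compl.1 hb')
    _ = 2 * η * h * k.choose ℓ * (n / N.choose ℓ) := by
        rw [hd]
        ring
    _ ≤ 2 * η * h * k.choose ℓ * (ℓ * ((i : ℝ) / N) ^ (ℓ - 1) / N) := by
        gcongr 2 * η * h * k.choose ℓ * ?_
        exact choose_pred_div_choose_le hℓ hi hiN (hℓr.trans (hrk.trans hkN))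
    _ = 2 * ℓ * (k.choose ℓ : ℝ) * η * ((i : ℝ) / N) ^ (ℓ - 1) * h / N := by ring
end

section
/- Azuma–Hoeffding with truncation: let (S_i)_{i=0}^m be a martingale with respect to the filtration generated by the nested random set process (B_i)_{i=0}^N on [N], with increments X_i = S_i - S_{i-1}, and let c_1,...,c_m be nonnegative reals. Then for every a > 0, P(S_m - S_0 > a) ≤ exp(-a²/(2Σ_{i=1}^m c_i²)) + N·Σ_{i=1}^m P(|X_i| > c_i), and the same bound holds for P(S_m - S_0 < -a). -/
/-!
Replace each increment `X i` by its truncation, which equals `X i` on the atoms of time `i - 1`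
on which `|X i| ≤ c i` everywhere, and `0` on the other atoms. The truncations are still
martingale differences and are bounded by `c i`, so Hoeffding's lemma on each atom, iterated along
the filtration, bounds the exponential moments of their sum, and a Chernoff bound gives the
Gaussian term. The two sums differ only on bad atoms, those containing some `τ` with
`|X i τ| > c i`; composing a permutation of such an atom with a transposition sends it into
`{|X i| > c i}`, injectively once one of the `N` positions is recorded, whence the factor `N`.
-/

open Finset Real

theorem Finset.sum_exp_mul_le_card_mul_exp {α : Type*} (s : Finset α) {x : α → ℝ} {c : ℝ}
    (hx : ∀ a ∈ s, |x a| ≤ c) (hsum : ∑ a ∈ s, x a = 0) (l : ℝ) :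
    ∑ a ∈ s, exp (l * x a) ≤ #s * exp (l ^ 2 * c ^ 2 / 2) := by
  have hpoint : ∀ a ∈ s, exp (l * x a) ≤ cosh (l * c) + x a / c * sinh (l * c) := by
    intro a ha
    have hratio : |x a / c| ≤ 1 := by
      rw [abs_div]
      exact div_le_one_of_le₀ ((hx a ha).trans (le_abs_self c)) (abs_nonneg c)
    convert exp_mul_le_cosh_add_mul_sinh hratio (l * c) using 2
    rcases eq_or_ne c 0 with rfl | hc
    · simp [abs_nonpos_iff.mp (hx a ha)]
    · field_simp
  calc ∑ a ∈ s, exp (l * x a)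
      ≤ ∑ a ∈ s, (cosh (l * c) + x a / c * sinh (l * c)) := sum_le_sum hpoint
    _ = #s * cosh (l * c) := by rw [sum_add_distrib, ← sum_mul, ← sum_div, hsum]; simp
    _ ≤ #s * exp (l ^ 2 * c ^ 2 / 2) := by
      gcongr
      simpa [mul_pow] using cosh_le_exp_half_sq (l * c)

theorem Finset.sum_mul_le_of_sum_fiber_le {Ω β : Type*} [Fintype Ω] [DecidableEq β]
    (p : Ω → β) {f g : Ω → ℝ} {B : ℝ} (hf : ∀ σ, 0 ≤ f σ)
    (hfp : ∀ σ τ, p σ = p τ → f σ = f τ)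
    (hg : ∀ σ, ∑ τ with p τ = p σ, g τ ≤ #{τ | p τ = p σ} * B) :
    ∑ σ, f σ * g σ ≤ B * ∑ σ, f σ := by
  have hmaps : ∀ σ ∈ univ, p σ ∈ univ.image p := fun σ hσ => mem_image_of_mem p hσ
  rw [← sum_fiberwise_of_maps_to hmaps, ← sum_fiberwise_of_maps_to hmaps, mul_sum]
  refine sum_le_sum fun b hb => ?_
  obtain ⟨σ₀, -, rfl⟩ := mem_image.mp hb
  have hconst : ∀ σ ∈ univ.filter (fun σ => p σ = p σ₀), f σ = f σ₀ :=
    fun σ hσ => hfp _ _ (mem_filter.mp hσ).2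
  rw [sum_congr rfl fun σ hσ => by rw [hconst σ hσ], ← mul_sum, sum_congr rfl hconst, sum_const,
    nsmul_eq_mul]
  calc f σ₀ * ∑ τ with p τ = p σ₀, g τ ≤ f σ₀ * (#{τ | p τ = p σ₀} * B) := by
        gcongr
        exacts [hf σ₀, hg σ₀]
    _ = B * (#{τ | p τ = p σ₀} * f σ₀) := by ring

theorem Finset.sum_Icc_one_sub_pred {M : Type*} [AddCommGroup M] (g : ℕ → M) (m : ℕ) :
    ∑ i ∈ Icc 1 m, (g i - g (i - 1)) = g m - g 0 := by
  induction m with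
  | zero => simp
  | succ n ih => rw [sum_Icc_succ_top (by omega), ih, Nat.add_sub_cancel, sub_add_sub_cancel']

section FiniteFiltration

/- A filtration of partitions of the finite space `Ω` is given by maps `κ k : Ω → β`: the atoms
at time `k` are the fibres of `κ k`, and `hκ` says that they refine as `k` grows. -/

variable {Ω β : Type*} [Fintype Ω] [DecidableEq β]

theorem sum_exp_mul_sum_Icc_le (κ : ℕ → Ω → β)
    (hκ : ∀ i k, i ≤ k → ∀ σ τ, κ k σ = κ k τ → κ i σ = κ i τ)
    (Y : ℕ → Ω → ℝ) (c : ℕ → ℝ) (n : ℕ)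
    (hY : ∀ i ∈ Icc 1 n, ∀ σ τ, κ i σ = κ i τ → Y i σ = Y i τ)
    (hbound : ∀ i ∈ Icc 1 n, ∀ σ, |Y i σ| ≤ c i)
    (hmean : ∀ i ∈ Icc 1 n, ∀ σ, ∑ τ with κ (i - 1) τ = κ (i - 1) σ, Y i τ = 0) (l : ℝ) :
    ∑ σ, exp (l * ∑ i ∈ Icc 1 n, Y i σ)
      ≤ Fintype.card Ω * exp (l ^ 2 * (∑ i ∈ Icc 1 n, c i ^ 2) / 2) := by
  induction n with
  | zero => simp
  | succ n ih =>
    have hsub : Icc 1 n ⊆ Icc 1 (n + 1) := Icc_subset_Icc_right n.le_succ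
    have hlast : n + 1 ∈ Icc 1 (n + 1) := by simp
    have hpartial : ∀ σ τ, κ n σ = κ n τ → ∑ i ∈ Icc 1 n, Y i σ = ∑ i ∈ Icc 1 n, Y i τ :=
      fun σ τ h => sum_congr rfl fun i hi =>
        hY i (hsub hi) σ τ (hκ i n (mem_Icc.mp hi).2 σ τ h)
    have hstep : ∑ σ, exp (l * ∑ i ∈ Icc 1 n, Y i σ) * exp (l * Y (n + 1) σ)
        ≤ exp (l ^ 2 * c (n + 1) ^ 2 / 2) * ∑ σ, exp (l * ∑ i ∈ Icc 1 n, Y i σ) :=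
      sum_mul_le_of_sum_fiber_le (κ n) (fun σ => (exp_pos _).le)
        (fun σ τ h => by rw [hpartial σ τ h]) fun σ =>
          sum_exp_mul_le_card_mul_exp _ (fun τ _ => hbound _ hlast τ) (hmean _ hlast σ) l
    calc ∑ σ, exp (l * ∑ i ∈ Icc 1 (n + 1), Y i σ)
        = ∑ σ, exp (l * ∑ i ∈ Icc 1 n, Y i σ) * exp (l * Y (n + 1) σ) := by
          simp_rw [sum_Icc_succ_top (by omega : 1 ≤ n + 1), mul_add, exp_add]
      _ ≤ exp (l ^ 2 * c (n + 1) ^ 2 / 2) *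
            (Fintype.card Ω * exp (l ^ 2 * (∑ i ∈ Icc 1 n, c i ^ 2) / 2)) := by
          refine hstep.trans (mul_le_mul_of_nonneg_left (ih ?_ ?_ ?_) (exp_pos _).le)
          exacts [fun i hi => hY i (hsub hi), fun i hi => hbound i (hsub hi),
            fun i hi => hmean i (hsub hi)]
      _ = Fintype.card Ω * exp (l ^ 2 * (∑ i ∈ Icc 1 (n + 1), c i ^ 2) / 2) := by
          rw [sum_Icc_succ_top (by omega : 1 ≤ n + 1), mul_left_comm, ← exp_add]
          ring_nf

theorem card_lt_sum_Icc_le (κ : ℕ → Ω → β)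
    (hκ : ∀ i k, i ≤ k → ∀ σ τ, κ k σ = κ k τ → κ i σ = κ i τ)
    (Y : ℕ → Ω → ℝ) (c : ℕ → ℝ) (n : ℕ)
    (hY : ∀ i ∈ Icc 1 n, ∀ σ τ, κ i σ = κ i τ → Y i σ = Y i τ)
    (hbound : ∀ i ∈ Icc 1 n, ∀ σ, |Y i σ| ≤ c i)
    (hmean : ∀ i ∈ Icc 1 n, ∀ σ, ∑ τ with κ (i - 1) τ = κ (i - 1) σ, Y i τ = 0)
    {a : ℝ} (ha : 0 ≤ a) :
    (#{σ | a < ∑ i ∈ Icc 1 n, Y i σ} : ℝ)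
      ≤ Fintype.card Ω * exp (-a ^ 2 / (2 * ∑ i ∈ Icc 1 n, c i ^ 2)) := by
  set V := ∑ i ∈ Icc 1 n, c i ^ 2
  rcases (sum_nonneg fun i _ => sq_nonneg (c i) : 0 ≤ V).eq_or_lt with hV | hV
  · rw [show V = 0 from hV.symm, mul_zero, div_zero, exp_zero, mul_one]
    exact_mod_cast card_le_univ _
  set l := a / V
  have hl : 0 ≤ l := div_nonneg ha hV.le
  calc (#{σ | a < ∑ i ∈ Icc 1 n, Y i σ} : ℝ)
      = ∑ σ with a < ∑ i ∈ Icc 1 n, Y i σ, 1 := by simp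
    _ ≤ ∑ σ with a < ∑ i ∈ Icc 1 n, Y i σ, exp (l * ∑ i ∈ Icc 1 n, Y i σ - l * a) := by
        refine sum_le_sum fun σ hσ => one_le_exp ?_
        rw [← mul_sub]
        exact mul_nonneg hl (sub_nonneg.mpr (mem_filter.mp hσ).2.le)
    _ ≤ ∑ σ, exp (l * ∑ i ∈ Icc 1 n, Y i σ - l * a) :=
        sum_le_sum_of_subset_of_nonneg (filter_subset _ _) fun _ _ _ => (exp_pos _).le
    _ = exp (-(l * a)) * ∑ σ, exp (l * ∑ i ∈ Icc 1 n, Y i σ) := by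
        rw [mul_sum]
        simp_rw [← exp_add, neg_add_eq_sub]
    _ ≤ exp (-(l * a)) * (Fintype.card Ω * exp (l ^ 2 * V / 2)) := by
        gcongr
        exact sum_exp_mul_sum_Icc_le κ hκ Y c n hY hbound hmean l
    _ = Fintype.card Ω * exp (-a ^ 2 / (2 * V)) := by
        rw [mul_left_comm, ← exp_add]
        congr 2
        simp only [l]
        field_simp
        ring

end FiniteFiltration

section Truncation

variable {Ω β : Type*}

/-- The event that the conditional essential supremum of `|X i|` given time `i - 1` is `≤ c i`. -/
def boundedAtoms (κ : ℕ → Ω → β) (X : ℕ → Ω → ℝ) (c : ℕ → ℝ) (i : ℕ) : Set Ω :=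
  {σ | ∀ τ, κ (i - 1) τ = κ (i - 1) σ → |X i τ| ≤ c i}

noncomputable def truncation (κ : ℕ → Ω → β) (X : ℕ → Ω → ℝ) (c : ℕ → ℝ) (i : ℕ) : Ω → ℝ :=
  (boundedAtoms κ X c i).indicator (X i)

variable {κ : ℕ → Ω → β} {X : ℕ → Ω → ℝ} {c : ℕ → ℝ} {i : ℕ}

theorem truncation_of_mem {σ : Ω} (h : σ ∈ boundedAtoms κ X c i) :
    truncation κ X c i σ = X i σ :=
  Set.indicator_of_mem h _

theorem truncation_of_notMem {σ : Ω} (h : σ ∉ boundedAtoms κ X c i) :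
    truncation κ X c i σ = 0 :=
  Set.indicator_of_notMem h _

theorem mem_boundedAtoms_congr {σ τ : Ω} (h : κ (i - 1) σ = κ (i - 1) τ) :
    σ ∈ boundedAtoms κ X c i ↔ τ ∈ boundedAtoms κ X c i := by
  simp only [boundedAtoms, Set.mem_ofPred_eq, h]

theorem truncation_congr (hκ : ∀ σ τ, κ i σ = κ i τ → κ (i - 1) σ = κ (i - 1) τ)
    (hX : ∀ σ τ, κ i σ = κ i τ → X i σ = X i τ) {σ τ : Ω} (h : κ i σ = κ i τ) :
    truncation κ X c i σ = truncation κ X c i τ := by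
  by_cases hσ : σ ∈ boundedAtoms κ X c i
  · have hτ := (mem_boundedAtoms_congr (hκ σ τ h)).mp hσ
    rw [truncation_of_mem hσ, truncation_of_mem hτ, hX σ τ h]
  · have hτ := (mem_boundedAtoms_congr (hκ σ τ h)).not.mp hσ
    rw [truncation_of_notMem hσ, truncation_of_notMem hτ]

theorem abs_truncation_le (hc : 0 ≤ c i) (σ : Ω) : |truncation κ X c i σ| ≤ c i := by
  by_cases hσ : σ ∈ boundedAtoms κ X c i
  · rw [truncation_of_mem hσ]
    exact hσ σ rfl
  · rwa [truncation_of_notMem hσ, abs_zero]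

theorem sum_truncation_atom_eq_zero [Fintype Ω] [DecidableEq β]
    (hmean : ∀ σ, ∑ τ with κ (i - 1) τ = κ (i - 1) σ, X i τ = 0) (σ : Ω) :
    ∑ τ with κ (i - 1) τ = κ (i - 1) σ, truncation κ X c i τ = 0 := by
  have hatom : ∀ τ ∈ univ.filter (fun τ => κ (i - 1) τ = κ (i - 1) σ),
      (τ ∈ boundedAtoms κ X c i ↔ σ ∈ boundedAtoms κ X c i) :=
    fun τ hτ => mem_boundedAtoms_congr (mem_filter.mp hτ).2
  by_cases hσ : σ ∈ boundedAtoms κ X c i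
  · rw [← hmean σ]
    exact sum_congr rfl fun τ hτ => truncation_of_mem ((hatom τ hτ).mpr hσ)
  · exact sum_eq_zero fun τ hτ => truncation_of_notMem ((hatom τ hτ).not.mpr hσ)

open scoped Classical in
theorem card_lt_sum_Icc_le_add_card_notMem_boundedAtoms [Fintype Ω] [DecidableEq β]
    (hκ : ∀ i k, i ≤ k → ∀ σ τ, κ k σ = κ k τ → κ i σ = κ i τ)
    (hc : ∀ i, 0 ≤ c i) (n : ℕ)
    (hX : ∀ i ∈ Icc 1 n, ∀ σ τ, κ i σ = κ i τ → X i σ = X i τ)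
    (hmean : ∀ i ∈ Icc 1 n, ∀ σ, ∑ τ with κ (i - 1) τ = κ (i - 1) σ, X i τ = 0)
    {a : ℝ} (ha : 0 ≤ a) :
    (#{σ | a < ∑ i ∈ Icc 1 n, X i σ} : ℝ)
      ≤ Fintype.card Ω * exp (-a ^ 2 / (2 * ∑ i ∈ Icc 1 n, c i ^ 2))
        + ∑ i ∈ Icc 1 n, (#{σ | σ ∉ boundedAtoms κ X c i} : ℝ) := by
  have hsubset : ({σ | a < ∑ i ∈ Icc 1 n, X i σ} : Finset Ω)
      ⊆ ({σ | a < ∑ i ∈ Icc 1 n, truncation κ X c i σ} : Finset Ω)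
        ∪ (Icc 1 n).biUnion fun i => {σ | σ ∉ boundedAtoms κ X c i} := by
    intro σ hσ
    by_cases hall : ∀ i ∈ Icc 1 n, σ ∈ boundedAtoms κ X c i
    · refine mem_union_left _ (mem_filter.mpr ⟨mem_univ σ, ?_⟩)
      rw [sum_congr rfl fun i hi => truncation_of_mem (hall i hi)]
      exact (mem_filter.mp hσ).2
    · push Not at hall
      obtain ⟨i, hi, hσi⟩ := hall
      exact mem_union_right _ (mem_biUnion.mpr ⟨i, hi, mem_filter.mpr ⟨mem_univ σ, hσi⟩⟩)
  calc (#{σ | a < ∑ i ∈ Icc 1 n, X i σ} : ℝ)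
      ≤ #{σ | a < ∑ i ∈ Icc 1 n, truncation κ X c i σ}
        + ∑ i ∈ Icc 1 n, (#{σ | σ ∉ boundedAtoms κ X c i} : ℝ) := by
        exact_mod_cast (card_le_card hsubset).trans
          ((card_union_le _ _).trans (Nat.add_le_add_left card_biUnion_le _))
    _ ≤ _ := by
        gcongr
        refine card_lt_sum_Icc_le κ hκ _ c n (fun i hi σ τ => ?_)
          (fun i _ => abs_truncation_le (hc i)) (fun i hi => sum_truncation_atom_eq_zero (hmean i hi))
          ha
        exact truncation_congr (hκ _ _ (Nat.sub_le i 1)) (hX i hi)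

end Truncation

section Permutations

variable {N : ℕ}

/-- Knowing `B_0, …, B_k` is knowing `σ` on the first `k` positions; the rest is padded. -/
def prefixKey (k : ℕ) (σ : Equiv.Perm (Fin N)) : Fin N → Fin N :=
  fun t => if (t : ℕ) < k then σ t else t

theorem prefixKey_eq_prefixKey_iff {k : ℕ} {σ τ : Equiv.Perm (Fin N)} :
    prefixKey k σ = prefixKey k τ ↔ ∀ t : Fin N, (t : ℕ) < k → σ t = τ t := by
  refine ⟨fun h t ht => by simpa [prefixKey, ht] using congrFun h t, fun h => funext fun t => ?_⟩
  by_cases ht : (t : ℕ) < k <;> simp [prefixKey, ht, h t]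

theorem prefixKey_eq_of_le {i k : ℕ} (hik : i ≤ k) (σ τ : Equiv.Perm (Fin N))
    (h : prefixKey k σ = prefixKey k τ) : prefixKey i σ = prefixKey i τ := by
  rw [prefixKey_eq_prefixKey_iff] at h ⊢
  exact fun t ht => h t (ht.trans_le hik)

theorem card_le_mul_card_of_forall_exists_agree {B E : Finset (Equiv.Perm (Fin N))} {k : ℕ}
    (hk : k < N)
    (hE : ∀ σ τ : Equiv.Perm (Fin N),
      (∀ t : Fin N, (t : ℕ) < k + 1 → σ t = τ t) → σ ∈ E → τ ∈ E)
    (hB : ∀ σ ∈ B, ∃ τ ∈ E, ∀ t : Fin N, (t : ℕ) < k → τ t = σ t) :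
    #B ≤ N * #E := by
  choose! w hwE hw using hB
  set k₀ : Fin N := ⟨k, hk⟩
  -- `σ * swap j k₀` with `σ j = w σ k₀` agrees with `w σ` on the first `k + 1` positions,
  -- and `σ` is recovered from `j` and `σ * swap j k₀`.
  let swapIn (σ : Equiv.Perm (Fin N)) : Fin N × Equiv.Perm (Fin N) :=
    (σ⁻¹ (w σ k₀), σ * Equiv.swap (σ⁻¹ (w σ k₀)) k₀)
  have hmaps : ∀ σ ∈ B, swapIn σ ∈ (univ : Finset (Fin N)) ×ˢ E := by
    intro σ hσ
    refine mem_product.mpr ⟨mem_univ _, hE (w σ) _ (fun t ht => ?_) (hwE σ hσ)⟩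
    set j := σ⁻¹ (w σ k₀)
    have hσj : σ j = w σ k₀ := σ.apply_symm_apply (w σ k₀)
    rcases (Nat.lt_succ_iff.mp ht).lt_or_eq with ht | ht
    · have htk : t ≠ k₀ := fun h => by simp [h, k₀] at ht
      have htj : t ≠ j := fun h => htk ((w σ).injective (by rw [← hσj, ← h, hw σ hσ t ht]))
      rw [Equiv.Perm.mul_apply, Equiv.swap_apply_of_ne_of_ne htj htk, hw σ hσ t ht]
    · rw [show t = k₀ from Fin.ext ht, Equiv.Perm.mul_apply, Equiv.swap_apply_right, hσj]
  have hinj : Set.InjOn swapIn B := by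
    intro σ₁ _ σ₂ _ h
    simp only [swapIn, Prod.mk.injEq] at h
    rw [h.1] at h
    exact mul_right_cancel h.2
  calc #B ≤ #((univ : Finset (Fin N)) ×ˢ E) := card_le_card_of_injOn swapIn hmaps hinj
    _ = N * #E := by simp

open scoped Classical in
theorem card_notMem_boundedAtoms_prefixKey_le {X : ℕ → Equiv.Perm (Fin N) → ℝ} {c : ℕ → ℝ}
    {i : ℕ} (hi : i - 1 < N) (hX : ∀ σ τ, prefixKey i σ = prefixKey i τ → X i σ = X i τ) :
    #{σ | σ ∉ boundedAtoms prefixKey X c i} ≤ N * #{σ | |X i σ| > c i} := by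
  refine card_le_mul_card_of_forall_exists_agree hi (fun σ τ h hσ => ?_) fun σ hσ => ?_
  · simp only [mem_filter, mem_univ, true_and] at hσ ⊢
    rwa [← hX σ τ (prefixKey_eq_prefixKey_iff.mpr fun t ht => h t (by omega))]
  · simp only [boundedAtoms, mem_filter, mem_univ, true_and, Set.mem_ofPred_eq, not_forall,
      not_le, prefixKey_eq_prefixKey_iff] at hσ ⊢
    obtain ⟨τ, hτσ, hτ⟩ := hσ
    exact ⟨τ, hτ, hτσ⟩

end Permutations

open scoped Classical in
theorem card_sub_gt_div_card_le {N m : ℕ} (hm : m ≤ N)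
    (S : ℕ → Equiv.Perm (Fin N) → ℝ)
    (hadapted : ∀ i, i ≤ m → ∀ σ τ : Equiv.Perm (Fin N),
      (∀ t : Fin N, (t : ℕ) < i → σ t = τ t) → S i σ = S i τ)
    (X : ℕ → Equiv.Perm (Fin N) → ℝ)
    (hX : ∀ i σ, X i σ = S i σ - S (i - 1) σ)
    (hmart : ∀ i, 1 ≤ i → i ≤ m → ∀ σ : Equiv.Perm (Fin N),
      (∑ τ ∈ Finset.univ.filter (fun τ : Equiv.Perm (Fin N) =>
          ∀ t : Fin N, (t : ℕ) < i - 1 → τ t = σ t), X i τ) = 0)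
    {c : ℕ → ℝ} (hc : ∀ i, 0 ≤ c i) {a : ℝ} (ha : 0 ≤ a) :
    (#{σ | S m σ - S 0 σ > a} : ℝ) / Fintype.card (Equiv.Perm (Fin N))
      ≤ exp (-a ^ 2 / (2 * ∑ i ∈ Icc 1 m, c i ^ 2))
        + N * ∑ i ∈ Icc 1 m, (#{σ | |X i σ| > c i} : ℝ) / Fintype.card (Equiv.Perm (Fin N)) := by
  set K : ℝ := (Fintype.card (Equiv.Perm (Fin N)) : ℝ)
  have hK : 0 < K := Nat.cast_pos.mpr Fintype.card_pos
  have hXadapted : ∀ i ∈ Icc 1 m, ∀ σ τ, prefixKey i σ = prefixKey i τ → X i σ = X i τ := by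
    intro i hi σ τ h
    have hi' := mem_Icc.mp hi
    rw [prefixKey_eq_prefixKey_iff] at h
    rw [hX, hX, hadapted i hi'.2 σ τ h, hadapted (i - 1) (by omega) σ τ fun t ht => h t (by omega)]
  have hXmean : ∀ i ∈ Icc 1 m, ∀ σ,
      ∑ τ with prefixKey (i - 1) τ = prefixKey (i - 1) σ, X i τ = 0 := by
    intro i hi σ
    simpa only [prefixKey_eq_prefixKey_iff] using hmart i (mem_Icc.mp hi).1 (mem_Icc.mp hi).2 σ
  have hbad : ∀ i ∈ Icc 1 m, (#{σ | σ ∉ boundedAtoms prefixKey X c i} : ℝ)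
      ≤ N * #{σ | |X i σ| > c i} := fun i hi => by
    have hi' := mem_Icc.mp hi
    exact_mod_cast card_notMem_boundedAtoms_prefixKey_le (by omega) (hXadapted i hi)
  have hevent : univ.filter (fun σ => S m σ - S 0 σ > a)
      = univ.filter (fun σ => a < ∑ i ∈ Icc 1 m, X i σ) := by
    refine filter_congr fun σ _ => ?_
    simp only [hX, sum_Icc_one_sub_pred fun i => S i σ, gt_iff_lt]
  calc (#{σ | S m σ - S 0 σ > a} : ℝ) / K
      ≤ (K * exp (-a ^ 2 / (2 * ∑ i ∈ Icc 1 m, c i ^ 2))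
          + ∑ i ∈ Icc 1 m, (#{σ | σ ∉ boundedAtoms prefixKey X c i} : ℝ)) / K := by
        rw [hevent]
        gcongr
        exact card_lt_sum_Icc_le_add_card_notMem_boundedAtoms
          (fun i k hik => prefixKey_eq_of_le hik) hc m hXadapted hXmean ha
    _ ≤ (K * exp (-a ^ 2 / (2 * ∑ i ∈ Icc 1 m, c i ^ 2))
          + N * ∑ i ∈ Icc 1 m, (#{σ | |X i σ| > c i} : ℝ)) / K := by
        gcongr
        rw [mul_sum]
        exact sum_le_sum hbad
    _ = _ := by
        rw [add_div, mul_div_cancel_left₀ _ hK.ne', mul_div_assoc, sum_div]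

open Finset in
/-- Azuma–Hoeffding with truncation, for martingales adapted to the filtration of
the nested random-set process on `[N]` (generated by a uniformly random
permutation; knowing `B_0,…,B_i` is the same as knowing the first `i` values of
the permutation).  If `(S_i)_{i=0}^m` is adapted (each `S_i` depends only on the
first `i` values) and is a martingale (each increment `X_i = S_i - S_{i-1}` has
zero conditional mean given the first `i-1` values), then for nonnegative
`c_1,…,c_m` and every `a > 0`:
`P(S_m - S_0 > a) ≤ exp(-a²/(2Σ c_i²)) + N·Σ_i P(|X_i| > c_i)`,
and the same bound holds for `P(S_m - S_0 < -a)`. -/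
theorem azuma_hoeffding_truncated (N m : ℕ) (hm : m ≤ N)
    (S : ℕ → Equiv.Perm (Fin N) → ℝ)
    (hadapted : ∀ i, i ≤ m → ∀ σ τ : Equiv.Perm (Fin N),
      (∀ t : Fin N, (t : ℕ) < i → σ t = τ t) → S i σ = S i τ)
    (X : ℕ → Equiv.Perm (Fin N) → ℝ)
    (hX : ∀ i σ, X i σ = S i σ - S (i - 1) σ)
    (hmart : ∀ i, 1 ≤ i → i ≤ m → ∀ σ : Equiv.Perm (Fin N),
      (∑ τ ∈ Finset.univ.filter (fun τ : Equiv.Perm (Fin N) =>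
          ∀ t : Fin N, (t : ℕ) < i - 1 → τ t = σ t), X i τ) = 0)
    (c : ℕ → ℝ) (hc : ∀ i, 0 ≤ c i) (a : ℝ) (ha : 0 < a) :
    (((Finset.univ.filter (fun σ : Equiv.Perm (Fin N) => S m σ - S 0 σ > a)).card : ℝ)
          / (Fintype.card (Equiv.Perm (Fin N)))
        ≤ Real.exp (-a ^ 2 / (2 * ∑ i ∈ Finset.Icc 1 m, (c i) ^ 2))
          + N * ∑ i ∈ Finset.Icc 1 m,
              ((Finset.univ.filter (fun σ : Equiv.Perm (Fin N) => |X i σ| > c i)).card : ℝ)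
                / (Fintype.card (Equiv.Perm (Fin N)))) ∧
    (((Finset.univ.filter (fun σ : Equiv.Perm (Fin N) => S m σ - S 0 σ < -a)).card : ℝ)
          / (Fintype.card (Equiv.Perm (Fin N)))
        ≤ Real.exp (-a ^ 2 / (2 * ∑ i ∈ Finset.Icc 1 m, (c i) ^ 2))
          + N * ∑ i ∈ Finset.Icc 1 m,
              ((Finset.univ.filter (fun σ : Equiv.Perm (Fin N) => |X i σ| > c i)).card : ℝ)
                / (Fintype.card (Equiv.Perm (Fin N)))) := by
  refine ⟨card_sub_gt_div_card_le hm S hadapted X hX hmart hc ha.le, ?_⟩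
  have hlower := card_sub_gt_div_card_le hm (-S)
    (fun i hi σ τ h => by simp only [Pi.neg_apply, hadapted i hi σ τ h]) (-X)
    (fun i σ => by simp only [Pi.neg_apply, hX]; ring)
    (fun i hi hi' σ => by simp only [Pi.neg_apply, sum_neg_distrib, hmart i hi hi' σ, neg_zero])
    hc ha.le
  have hevent : ∀ σ, -S m σ - -S 0 σ > a ↔ S m σ - S 0 σ < -a := fun σ => by
    constructor <;> intro h <;> linarith
  simpa only [Pi.neg_apply, hevent, abs_neg] using hlower
end
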